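/- arXiv:2410.04695 — 8 statements merged into one kernel-verified Lean document; each statement's English description precedes it below -/
import Mathlib

section
/- Let f : ℝⁿ → ℝ ∪ {+∞} be proper and lsc, X ⊆ ℝⁿ closed with dom f ∩ X unbounded, and suppose X^∞ ∩ {d : f^∞(d) ≤ 0} = {0}. Then the problem inf_{x∈X} f(x) has weak sharp minima at infinity: there exist c > 0 and R > 0 such that f(x) − f_* ≥ c · dist(x, Sol) for all x ∈ X with ‖x‖ ≥ R, where f_* = inf_X f and Sol = argmin_X f (assumed here, as follows from the hypothesis, to be nonempty and compact with f_* finite). -/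
open Filter Topology Metric Set RealInnerProductSpace

noncomputable section

variable {E : Type*} [NormedAddCommGroup E] [InnerProductSpace ℝ E]

/-- Asymptotic cone of a set. -/
def asympCone (X : Set E) : Set E :=
  {u | ∃ t : ℕ → ℝ, ∃ x : ℕ → E,
    Tendsto t atTop atTop ∧ (∀ k, x k ∈ X) ∧
    Tendsto (fun k => (t k)⁻¹ • x k) atTop (𝓝 u)}

/-- Asymptotic function of an extended-real-valued function. -/
def asympFun (f : E → EReal) (d : E) : EReal :=
  sInf {L : EReal | ∃ t : ℕ → ℝ, ∃ dk : ℕ → E,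
    Tendsto t atTop atTop ∧ Tendsto dk atTop (𝓝 d) ∧
    L = liminf (fun k => (((t k)⁻¹ : ℝ) : EReal) * f (t k • dk k)) atTop}

/-- q-asymptotic function. -/
def qAsympFun (f : E → EReal) (u : E) : EReal :=
  ⨆ x ∈ {x : E | f x ≠ ⊤}, ⨆ t ∈ Set.Ioi (0:ℝ), ((t⁻¹ : ℝ) : EReal) * (f (x + t • u) - f x)

/-- A proper function: never `⊥` and not identically `⊤`. -/
def ERealProper (f : E → EReal) : Prop := (∀ x, f x ≠ ⊥) ∧ ∃ x, f x ≠ ⊤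

/-- Convexity for extended-real-valued functions. -/
def ERealConvexFn (f : E → EReal) : Prop :=
  ∀ x y : E, ∀ a b : ℝ, 0 ≤ a → 0 ≤ b → a + b = 1 →
    f (a • x + b • y) ≤ (a : EReal) * f x + (b : EReal) * f y

/-- Quasiconvexity for extended-real-valued functions. -/
def ERealQuasiconvex (f : E → EReal) : Prop :=
  ∀ x y : E, ∀ a : ℝ, 0 ≤ a → a ≤ 1 →
    f (a • x + (1 - a) • y) ≤ max (f x) (f y)

/-- Solution set of the linearly perturbed problem `inf_{x ∈ X} (f x - ⟪u, x⟫)`. -/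
def Sol (f : E → EReal) (X : Set E) (u : E) : Set E :=
  {x ∈ X | ∀ y ∈ X, f x - ((inner ℝ u x : ℝ) : EReal) ≤ f y - ((inner ℝ u y : ℝ) : EReal)}

/-- Optimal value function of the perturbed problem. -/
def valFn (f : E → EReal) (X : Set E) (u : E) : EReal :=
  ⨅ x ∈ X, (f x - ((inner ℝ u x : ℝ) : EReal))

/-! The cone condition forces `f` to grow at least linearly on `X`: otherwise there are
`xₖ ∈ X` with `‖xₖ‖ → ∞` and `f xₖ < ‖xₖ‖ / (k + 1)`, and a limit `d` of the unit vectors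
`xₖ / ‖xₖ‖` is a nonzero element of `X^∞` with `f^∞ d ≤ 0`. Since `Sol` is bounded,
`dist (x, Sol) ≤ ‖x‖ + M`, so linear growth of `f` dominates a multiple of the distance. -/

theorem Metric.infDist_le_norm_add_of_subset_closedBall {F : Type*} [SeminormedAddCommGroup F]
    {S : Set F} {M : ℝ} (hM : 0 ≤ M) (hS : S ⊆ closedBall 0 M) (x : F) :
    infDist x S ≤ ‖x‖ + M := by
  rcases S.eq_empty_or_nonempty with rfl | ⟨z, hz⟩
  · rw [infDist_empty]
    positivity
  · calc infDist x S ≤ ‖x - z‖ := (infDist_le_dist_of_mem hz).trans_eq (dist_eq_norm x z)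
      _ ≤ ‖x‖ + ‖z‖ := norm_sub_le x z
      _ ≤ ‖x‖ + M := by gcongr; simpa using hS hz

def GrowsLinearlyOn {F : Type*} [Norm F] (f : F → EReal) (X : Set F) : Prop :=
  ∃ δ > (0 : ℝ), ∃ R : ℝ, ∀ x ∈ X, R ≤ ‖x‖ → ((δ * ‖x‖ : ℝ) : EReal) ≤ f x

theorem GrowsLinearlyOn.exists_mul_infDist_le_sub {F : Type*} [SeminormedAddCommGroup F]
    {f : F → EReal} {X S : Set F} (hf : GrowsLinearlyOn f X) (hS : Bornology.IsBounded S)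
    (r : ℝ) :
    ∃ c > (0 : ℝ), ∃ R > (0 : ℝ), ∀ x ∈ X, R ≤ ‖x‖ →
      ((c * infDist x S : ℝ) : EReal) ≤ f x - r := by
  obtain ⟨δ, hδ, R₀, hgrow⟩ := hf
  obtain ⟨M, hM, hSM⟩ := hS.subset_closedBall_lt 0 0
  refine ⟨δ / 2, by positivity, max R₀ (M + 2 * |r| / δ),
    lt_max_of_lt_right (by positivity), fun x hx hR => ?_⟩
  have hxM : M + 2 * |r| / δ ≤ ‖x‖ := le_of_max_le_right hR
  have hdist := infDist_le_norm_add_of_subset_closedBall hM.le hSM x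
  have hreal : δ / 2 * infDist x S ≤ δ * ‖x‖ - r := by
    have : δ / 2 * (2 * |r| / δ) = |r| := by field_simp
    nlinarith [le_abs_self r, mul_le_mul_of_nonneg_left hxM (by positivity : 0 ≤ δ / 2)]
  calc ((δ / 2 * infDist x S : ℝ) : EReal)
      ≤ ((δ * ‖x‖ - r : ℝ) : EReal) := by exact_mod_cast hreal
    _ = ((δ * ‖x‖ : ℝ) : EReal) - r := EReal.coe_sub _ _
    _ ≤ f x - r := EReal.sub_le_sub (hgrow x hx (le_of_max_le_left hR)) le_rfl

theorem asympFun_nonpos_of_le_mul {f : E → EReal} {d : E} {t ε : ℕ → ℝ} {x : ℕ → E}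
    (ht : Tendsto t atTop atTop) (hdir : Tendsto (fun k => (t k)⁻¹ • x k) atTop (𝓝 d))
    (hε : Tendsto ε atTop (𝓝 0)) (hfx : ∀ k, f (x k) ≤ ((ε k * t k : ℝ) : EReal)) :
    asympFun f d ≤ 0 := by
  have hbound : ∀ᶠ k in atTop,
      (((t k)⁻¹ : ℝ) : EReal) * f (t k • (t k)⁻¹ • x k) ≤ (ε k : EReal) := by
    filter_upwards [ht.eventually_gt_atTop 0] with k hk
    rw [smul_inv_smul₀ hk.ne']
    calc (((t k)⁻¹ : ℝ) : EReal) * f (x k)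
        ≤ (((t k)⁻¹ : ℝ) : EReal) * ((ε k * t k : ℝ) : EReal) :=
          mul_le_mul_of_nonneg_left (hfx k) (by exact_mod_cast (inv_pos.2 hk).le)
      _ = ε k := by rw [← EReal.coe_mul]; congr 1; field_simp
  calc asympFun f d
      ≤ liminf (fun k => (((t k)⁻¹ : ℝ) : EReal) * f (t k • (t k)⁻¹ • x k)) atTop :=
        sInf_le ⟨t, _, ht, hdir, rfl⟩
    _ ≤ liminf (fun k => (ε k : EReal)) atTop := liminf_le_liminf hbound
    _ = 0 := (EReal.tendsto_coe.2 hε).liminf_eq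

theorem growsLinearlyOn_of_asympCone_inter_subset [ProperSpace E] {f : E → EReal} {X : Set E}
    (hcone : asympCone X ∩ {d | asympFun f d ≤ 0} ⊆ {0}) : GrowsLinearlyOn f X := by
  by_contra h
  unfold GrowsLinearlyOn at h
  push Not at h
  choose x hxX hxnorm hfx using fun k : ℕ => h ((k + 1 : ℝ)⁻¹) (by positivity) (k + 1)
  have hpos (k : ℕ) : 0 < ‖x k‖ := lt_of_lt_of_le (by positivity) (hxnorm k)
  have hnorm : Tendsto (fun k => ‖x k‖) atTop atTop :=
    tendsto_atTop_mono hxnorm (tendsto_atTop_add_const_right _ 1 tendsto_natCast_atTop_atTop)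
  have hsphere (k : ℕ) : ‖x k‖⁻¹ • x k ∈ sphere (0 : E) 1 := by
    simp [norm_smul, (hpos k).ne']
  obtain ⟨d, hd, φ, hφ, hφd⟩ := (isCompact_sphere (0 : E) 1).tendsto_subseq hsphere
  have hε : Tendsto (fun k => ((φ k : ℝ) + 1)⁻¹) atTop (𝓝 0) :=
    (tendsto_atTop_add_const_right _ 1
      (tendsto_natCast_atTop_atTop.comp hφ.tendsto_atTop)).inv_tendsto_atTop
  have hφnorm := hnorm.comp hφ.tendsto_atTop
  have hmem : d ∈ asympCone X ∩ {d | asympFun f d ≤ 0} :=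
    ⟨⟨_, _, hφnorm, fun k => hxX (φ k), hφd⟩,
      asympFun_nonpos_of_le_mul hφnorm hφd hε fun k => (hfx (φ k)).le⟩
  rw [show d = 0 from hcone hmem] at hd
  simp at hd

theorem stmt3_general {n : ℕ} (f : EuclideanSpace ℝ (Fin n) → EReal)
    (X : Set (EuclideanSpace ℝ (Fin n)))
    (hcone : asympCone X ∩ {d | asympFun f d ≤ 0} = {0})
    (hSolcpt : IsCompact {x ∈ X | ∀ y ∈ X, f x ≤ f y})
    (hfin : ∃ r : ℝ, (⨅ x ∈ X, f x) = (r : EReal)) :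
    ∃ c > (0:ℝ), ∃ R > (0:ℝ), ∀ x ∈ X, R ≤ ‖x‖ →
      ((c * Metric.infDist x {z ∈ X | ∀ y ∈ X, f z ≤ f y} : ℝ) : EReal)
        ≤ f x - (⨅ z ∈ X, f z) := by
  obtain ⟨r, hr⟩ := hfin
  rw [hr]
  exact (growsLinearlyOn_of_asympCone_inter_subset hcone.subset).exists_mul_infDist_le_sub
    hSolcpt.isBounded r

theorem stmt3 {n : ℕ} (f : EuclideanSpace ℝ (Fin n) → EReal)
    (X : Set (EuclideanSpace ℝ (Fin n)))
    (hproper : ERealProper f) (hlsc : LowerSemicontinuous f) (hX : IsClosed X)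
    (hunb : ¬ Bornology.IsBounded ({x | f x ≠ ⊤} ∩ X))
    (hcone : asympCone X ∩ {d | asympFun f d ≤ 0} = {0})
    (hSolne : ({x ∈ X | ∀ y ∈ X, f x ≤ f y}).Nonempty)
    (hSolcpt : IsCompact {x ∈ X | ∀ y ∈ X, f x ≤ f y})
    (hfin : ∃ r : ℝ, (⨅ x ∈ X, f x) = (r : EReal)) :
    ∃ c > (0:ℝ), ∃ R > (0:ℝ), ∀ x ∈ X, R ≤ ‖x‖ →
      ((c * Metric.infDist x {z ∈ X | ∀ y ∈ X, f z ≤ f y} : ℝ) : EReal)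
        ≤ f x - (⨅ z ∈ X, f z) :=
  stmt3_general f X hcone hSolcpt hfin
end
end

section
/- Let f : ℝⁿ → ℝ ∪ {+∞} be proper and lsc, X ⊆ ℝⁿ closed with dom f ∩ X unbounded. If X^∞ ∩ {d : f^∞(d) ≤ 0} = {0}, then f is coercive on X, i.e., f(x) → +∞ as ‖x‖ → ∞ with x ∈ X. -/
/-!
If `f` stayed below some `M` on an unbounded part of `X`, pick `x k ∈ X` with `‖x k‖ → ∞` and
`f (x k) ≤ M`. By compactness of the unit sphere a subsequence of `x k / ‖x k‖` converges to a unit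
vector `d`. Then `d ∈ X^∞` by definition, and `f^∞(d) ≤ liminf M / ‖x k‖ = 0`, contradicting
`X^∞ ∩ {f^∞ ≤ 0} = {0}`.
-/

open Filter Topology Metric Set RealInnerProductSpace

noncomputable section

variable {E : Type*} [NormedAddCommGroup E] [InnerProductSpace ℝ E]

theorem asympFun_le_zero_of_le {f : E → EReal} {M : ℝ} {t : ℕ → ℝ} {x : ℕ → E} {d : E}
    (ht : Tendsto t atTop atTop) (hx : Tendsto (fun k => (t k)⁻¹ • x k) atTop (𝓝 d))
    (hf : ∀ k, f (x k) ≤ M) : asympFun f d ≤ 0 := by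
  have hbound : ∀ᶠ k in atTop,
      (((t k)⁻¹ : ℝ) : EReal) * f (t k • (t k)⁻¹ • x k) ≤ (((t k)⁻¹ * M : ℝ) : EReal) := by
    filter_upwards [ht.eventually_gt_atTop 0] with k hk
    rw [smul_inv_smul₀ hk.ne', EReal.coe_mul]
    exact mul_le_mul_of_nonneg_left (hf k) (by exact_mod_cast (inv_pos.2 hk).le)
  have hlim : Tendsto (fun k => (((t k)⁻¹ * M : ℝ) : EReal)) atTop (𝓝 0) := by
    rw [← EReal.coe_zero]
    exact EReal.tendsto_coe.2 (by simpa using ht.inv_tendsto_atTop.mul_const M)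
  calc asympFun f d
      ≤ liminf (fun k => (((t k)⁻¹ : ℝ) : EReal) * f (t k • (t k)⁻¹ • x k)) atTop :=
        sInf_le ⟨t, _, ht, hx, rfl⟩
    _ ≤ liminf (fun k => (((t k)⁻¹ * M : ℝ) : EReal)) atTop :=
        liminf_le_liminf hbound isBounded_ge_of_bot isCobounded_ge_of_top
    _ = 0 := hlim.liminf_eq

theorem exists_norm_eq_one_tendsto_normalize {F : Type*} [NormedAddCommGroup F]
    [NormedSpace ℝ F] [ProperSpace F] {x : ℕ → F} (hx : ∀ k, x k ≠ 0) :
    ∃ d : F, ‖d‖ = 1 ∧ ∃ φ : ℕ → ℕ, StrictMono φ ∧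
      Tendsto (fun k => ‖x (φ k)‖⁻¹ • x (φ k)) atTop (𝓝 d) := by
  have hsphere : ∀ k, ‖x k‖⁻¹ • x k ∈ sphere (0 : F) 1 := fun k => by
    rw [mem_sphere_zero_iff_norm, norm_smul, norm_inv, norm_norm,
      inv_mul_cancel₀ (norm_ne_zero_iff.2 (hx k))]
  obtain ⟨d, hd, φ, hφ, hconv⟩ := (isCompact_sphere (0 : F) 1).tendsto_subseq hsphere
  exact ⟨d, mem_sphere_zero_iff_norm.1 hd, φ, hφ, hconv⟩

theorem stmt4_general {n : ℕ} (f : EuclideanSpace ℝ (Fin n) → EReal)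
    (X : Set (EuclideanSpace ℝ (Fin n)))
    (hcone : asympCone X ∩ {d | asympFun f d ≤ 0} = {0}) :
    ∀ M : ℝ, ∃ R : ℝ, ∀ x ∈ X, R < ‖x‖ → (M : EReal) < f x := by
  by_contra! h
  obtain ⟨M, hM⟩ := h
  choose x hxX hxn hxf using fun k : ℕ => hM k
  have hnorm : Tendsto (fun k => ‖x k‖) atTop atTop :=
    tendsto_atTop_mono (fun k => (hxn k).le) tendsto_natCast_atTop_atTop
  obtain ⟨d, hd, φ, hφ, hconv⟩ := exists_norm_eq_one_tendsto_normalize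
    fun k => norm_pos_iff.1 ((Nat.cast_nonneg k).trans_lt (hxn k))
  have ht := hnorm.comp hφ.tendsto_atTop
  have hd_mem : d ∈ asympCone X ∩ {d | asympFun f d ≤ 0} :=
    ⟨⟨_, _, ht, fun k => hxX (φ k), hconv⟩, asympFun_le_zero_of_le ht hconv fun k => hxf (φ k)⟩
  rw [hcone, mem_singleton_iff] at hd_mem
  simp [hd_mem] at hd

theorem stmt4 {n : ℕ} (f : EuclideanSpace ℝ (Fin n) → EReal)
    (X : Set (EuclideanSpace ℝ (Fin n)))
    (hproper : ERealProper f) (hlsc : LowerSemicontinuous f) (hX : IsClosed X)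
    (hunb : ¬ Bornology.IsBounded ({x | f x ≠ ⊤} ∩ X))
    (hcone : asympCone X ∩ {d | asympFun f d ≤ 0} = {0}) :
    ∀ M : ℝ, ∃ R : ℝ, ∀ x ∈ X, R < ‖x‖ → (M : EReal) < f x :=
  stmt4_general f X hcone
end
end

section
/- Let X ⊆ ℝⁿ be a nonempty closed convex set and f : ℝⁿ → ℝ ∪ {+∞} a proper lsc convex function with dom f ∩ X unbounded. Then X^∞ ∩ {d : f^∞(d) ≤ 0} = {0} if and only if the solution set argmin_X f is nonempty and compact. -/
open Filter Topology Metric Set RealInnerProductSpace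

noncomputable section

variable {E : Type*} [NormedAddCommGroup E] [InnerProductSpace ℝ E]

/-!
If `X^∞ ∩ {f^∞ ≤ 0} = {0}`, every sublevel set `X ∩ {f ≤ α}` is bounded: the normalized points
`‖xₖ‖⁻¹ • xₖ` of an unbounded sequence in it accumulate (compactness of the unit sphere) at a unit
vector of `X^∞` with `f^∞ ≤ 0`. Such a sublevel set through a point of `dom f ∩ X` is then
compact, the lower semicontinuous `f` attains its minimum over `X` on it, and `argmin_X f` is a
closed subset of it.

Conversely, for `d ∈ X^∞` with `f^∞(d) ≤ 0`, convexity and lower semicontinuity make `f`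
nonincreasing along every ray `x + s • d`, so the ray from a minimizer stays in `argmin_X f`;
boundedness of `argmin_X f` forces `d = 0`.
-/

section Semicontinuity

variable {α β ι : Type*} [TopologicalSpace α] [LinearOrder β]

theorem nonempty_and_isCompact_argmin_of_isCompact_sublevel {f : α → β} {X : Set α}
    (hX : IsClosed X) (hf : LowerSemicontinuous f) {x₀ : α} (hx₀ : x₀ ∈ X)
    (hK : IsCompact (X ∩ {x | f x ≤ f x₀})) :
    {x ∈ X | ∀ y ∈ X, f x ≤ f y}.Nonempty ∧ IsCompact {x ∈ X | ∀ y ∈ X, f x ≤ f y} := by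
  have hK_ne : (X ∩ {x | f x ≤ f x₀}).Nonempty := ⟨x₀, hx₀, le_rfl⟩
  obtain ⟨xs, ⟨hxsX, -⟩, hxs_min⟩ := (hf.lowerSemicontinuousOn _).exists_isMinOn hK_ne hK
  have hxs_le : f xs ≤ f x₀ := hxs_min ⟨hx₀, le_rfl⟩
  refine ⟨⟨xs, hxsX, fun y hy => ?_⟩, hK.of_isClosed_subset ?_ fun x hx => ⟨hx.1, hx.2 x₀ hx₀⟩⟩
  · rcases le_total (f y) (f x₀) with hy₀ | hy₀
    · exact hxs_min ⟨hy, hy₀⟩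
    · exact hxs_le.trans hy₀
  · have : {x ∈ X | ∀ y ∈ X, f x ≤ f y} = X ∩ ⋂ y ∈ X, f ⁻¹' Iic (f y) := by
      ext; simp
    rw [this]
    exact hX.inter (isClosed_biInter fun y _ => hf.isClosed_preimage (f y))

theorem LowerSemicontinuous.le_of_frequently_le [TopologicalSpace β] [OrderTopology β]
    [DenselyOrdered β] {f : α → β} (hf : LowerSemicontinuous f) {l : Filter ι} {z : ι → α}
    {a : ι → β} {z₀ : α} {a₀ : β}
    (hz : Tendsto z l (𝓝 z₀)) (ha : Tendsto a l (𝓝 a₀)) (hfreq : ∃ᶠ k in l, f (z k) ≤ a k) :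
    f z₀ ≤ a₀ := by
  by_contra! h
  obtain ⟨c, hac, hcf⟩ := exists_between h
  have hf_ev : ∀ᶠ k in l, c < f (z k) := hz.eventually (hf z₀ c hcf)
  have ha_ev : ∀ᶠ k in l, a k < c := ha.eventually (gt_mem_nhds hac)
  obtain ⟨k, ⟨hfk, hak⟩, hle⟩ := ((hf_ev.and ha_ev).and_frequently hfreq).exists
  exact (hle.trans_lt (hak.trans hfk)).false

end Semicontinuity

theorem eq_zero_of_isBounded_of_forall_add_smul_mem {F : Type*} [NormedAddCommGroup F]
    [NormedSpace ℝ F] {S : Set F} (hS : Bornology.IsBounded S) {x d : F}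
    (h : ∀ s : ℝ, 0 < s → x + s • d ∈ S) : d = 0 := by
  by_contra hd
  have hd_pos : 0 < ‖d‖ := norm_pos_iff.2 hd
  obtain ⟨R, hR⟩ := isBounded_iff_forall_norm_le.1 hS
  set s := (|R| + ‖x‖ + 1) / ‖d‖
  have hs : 0 < s := by positivity
  have hsd : s * ‖d‖ = |R| + ‖x‖ + 1 := div_mul_cancel₀ _ hd_pos.ne'
  have := hR _ (h s hs)
  have := norm_sub_norm_le (s • d) (-x)
  rw [sub_neg_eq_add, add_comm, norm_neg, norm_smul, Real.norm_of_nonneg hs.le] at this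
  linarith [le_abs_self R]

theorem tendsto_one_sub_div_atTop {ι : Type*} {l : Filter ι} {t : ι → ℝ}
    (ht : Tendsto t l atTop) (s : ℝ) : Tendsto (fun k => 1 - s / t k) l (𝓝 1) := by
  simpa using tendsto_const_nhds.sub (tendsto_const_nhds.div_atTop ht)

theorem add_smul_mem_of_mem_asympCone {X : Set E} (hXcl : IsClosed X) (hXconv : Convex ℝ X)
    {x d : E} (hx : x ∈ X) (hd : d ∈ asympCone X) {s : ℝ} (hs : 0 < s) : x + s • d ∈ X := by
  obtain ⟨t, y, ht, hyX, hy⟩ := hd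
  have hlim : Tendsto (fun k => (1 - s / t k) • x + s • ((t k)⁻¹ • y k)) atTop
      (𝓝 (x + s • d)) := by
    simpa using ((tendsto_one_sub_div_atTop ht s).smul_const x).add (hy.const_smul s)
  refine hXcl.mem_of_tendsto hlim ?_
  filter_upwards [ht.eventually_ge_atTop s] with k hk
  have htk : 0 < t k := hs.trans_le hk
  rw [smul_smul, ← div_eq_mul_inv]
  exact hXconv hx (hyX k) (by linarith [(div_le_one htk).2 hk]) (by positivity) (by ring)

theorem exists_frequently_lt_of_asympFun_lt {f : E → EReal} {d : E} {c : EReal}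
    (h : asympFun f d < c) :
    ∃ t : ℕ → ℝ, ∃ dk : ℕ → E, Tendsto t atTop atTop ∧ Tendsto dk atTop (𝓝 d) ∧
      ∃ᶠ k in atTop, (((t k)⁻¹ : ℝ) : EReal) * f (t k • dk k) < c := by
  obtain ⟨L, ⟨t, dk, ht, hdk, rfl⟩, hL⟩ := sInf_lt_iff.1 h
  exact ⟨t, dk, ht, hdk, frequently_lt_of_liminf_lt (by isBoundedDefault) hL⟩

theorem asympFun_nonpos_of_tendsto_inv_smul {f : E → EReal} {α : ℝ} {t : ℕ → ℝ} {x : ℕ → E}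
    {d : E} (ht : Tendsto t atTop atTop) (hxf : ∀ k, f (x k) ≤ α)
    (hd : Tendsto (fun k => (t k)⁻¹ • x k) atTop (𝓝 d)) : asympFun f d ≤ 0 := by
  refine sInf_le_of_le ⟨t, fun k => (t k)⁻¹ • x k, ht, hd, rfl⟩ ?_
  have hbound : ∀ᶠ k in atTop, (((t k)⁻¹ : ℝ) : EReal) * f (t k • (t k)⁻¹ • x k) ≤
      (((t k)⁻¹ * α : ℝ) : EReal) := by
    filter_upwards [ht.eventually_gt_atTop 0] with k hk
    rw [smul_inv_smul₀ hk.ne', EReal.coe_mul]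
    exact mul_le_mul_of_nonneg_left (hxf k) (by exact_mod_cast (inv_pos.2 hk).le)
  have hlim : Tendsto (fun k => (((t k)⁻¹ * α : ℝ) : EReal)) atTop (𝓝 0) := by
    rw [← EReal.coe_zero]
    exact EReal.tendsto_coe.2 (by simpa using ht.inv_tendsto_atTop.mul_const α)
  exact (liminf_le_liminf hbound).trans hlim.liminf_eq.le

theorem zero_mem_asympCone {X : Set E} (hX : X.Nonempty) : (0 : E) ∈ asympCone X := by
  obtain ⟨x₀, hx₀⟩ := hX
  refine ⟨fun k => k, fun _ => x₀, tendsto_natCast_atTop_atTop, fun _ => hx₀, ?_⟩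
  simpa using (tendsto_natCast_atTop_atTop (R := ℝ)).inv_tendsto_atTop.smul_const x₀

theorem asympFun_zero_nonpos {f : E → EReal} {x₀ : E} {r : ℝ} (hr : f x₀ = r) :
    asympFun f 0 ≤ 0 :=
  asympFun_nonpos_of_tendsto_inv_smul (x := fun _ => x₀) tendsto_natCast_atTop_atTop
    (fun _ => hr.le)
    (by simpa using (tendsto_natCast_atTop_atTop (R := ℝ)).inv_tendsto_atTop.smul_const x₀)

theorem ERealConvexFn.le_of_inv_mul_lt {f : E → EReal} (hconv : ERealConvexFn f) {x y : E}
    {r s t ε : ℝ} (hx : f x = r) (hs : 0 < s) (hst : s ≤ t)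
    (hy : ((t⁻¹ : ℝ) : EReal) * f (t • y) < ε) :
    f ((1 - s / t) • x + s • y) ≤ (((1 - s / t) * r + s * ε : ℝ) : EReal) := by
  have ht : 0 < t := hs.trans_le hst
  have hsy : s • y = (s / t) • (t • y) := by rw [smul_smul, div_mul_cancel₀ _ ht.ne']
  calc f ((1 - s / t) • x + s • y)
      ≤ ((1 - s / t : ℝ) : EReal) * f x + ((s / t : ℝ) : EReal) * f (t • y) := by
        rw [hsy]
        exact hconv _ _ _ _ (by linarith [(div_le_one ht).2 hst]) (by positivity) (by ring)
    _ = (((1 - s / t) * r : ℝ) : EReal) + (s : EReal) * (((t⁻¹ : ℝ) : EReal) * f (t • y)) := by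
        rw [hx, ← EReal.coe_mul, ← mul_assoc, ← EReal.coe_mul, div_eq_mul_inv]
    _ ≤ (((1 - s / t) * r : ℝ) : EReal) + (s : EReal) * (ε : EReal) := by gcongr
    _ = (((1 - s / t) * r + s * ε : ℝ) : EReal) := by
        rw [EReal.coe_add, EReal.coe_mul s]

theorem ERealConvexFn.le_of_asympFun_nonpos {f : E → EReal} (hconv : ERealConvexFn f)
    (hlsc : LowerSemicontinuous f) {d : E} (hd : asympFun f d ≤ 0) {x : E} (hx : f x ≠ ⊥)
    {s : ℝ} (hs : 0 < s) : f (x + s • d) ≤ f x := by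
  rcases eq_or_ne (f x) ⊤ with hx_top | hx_top
  · exact hx_top ▸ le_top
  lift f x to ℝ using ⟨hx_top, hx⟩ with r hr
  -- The points `(1 - s / t k) • x + s • dk k` tend to `x + s • d`, and by convexity their values
  -- are frequently at most `(1 - s / t k) * r + s * ε`.
  have hle : ∀ ε : ℝ, 0 < ε → f (x + s • d) ≤ ((r + s * ε : ℝ) : EReal) := by
    intro ε hε
    obtain ⟨t, dk, ht, hdk, hfreq⟩ :=
      exists_frequently_lt_of_asympFun_lt (hd.trans_lt (EReal.coe_pos.2 hε))
    refine hlsc.le_of_frequently_le (l := atTop) (z := fun k => (1 - s / t k) • x + s • dk k)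
      (a := fun k => (((1 - s / t k) * r + s * ε : ℝ) : EReal)) ?_ ?_ ?_
    · simpa using ((tendsto_one_sub_div_atTop ht s).smul_const x).add (hdk.const_smul s)
    · exact EReal.tendsto_coe.2
        (by simpa using ((tendsto_one_sub_div_atTop ht s).mul_const r).add_const (s * ε))
    · exact (hfreq.and_eventually (ht.eventually_ge_atTop s)).mono
        fun k hk => hconv.le_of_inv_mul_lt hr.symm hs hk.2 hk.1
  refine le_of_forall_gt_imp_ge_of_dense fun c hc => ?_
  obtain ⟨q, hrq, hqc⟩ := EReal.exists_between_coe_real hc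
  have hrq : r < q := EReal.coe_lt_coe_iff.1 hrq
  have hq : r + s * ((q - r) / s) = q := by field_simp; ring
  calc f (x + s • d) ≤ ((r + s * ((q - r) / s) : ℝ) : EReal) :=
        hle _ (div_pos (sub_pos.2 hrq) hs)
    _ ≤ c := by rw [hq]; exact hqc.le

theorem isBounded_inter_sublevel_of_asympCone_inter_subset [ProperSpace E] {f : E → EReal}
    {X : Set E} (h : asympCone X ∩ {d | asympFun f d ≤ 0} ⊆ {0}) (α : ℝ) :
    Bornology.IsBounded (X ∩ {x | f x ≤ α}) := by
  by_contra hS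
  rw [isBounded_iff_forall_norm_le] at hS
  push Not at hS
  choose x hxS hx_norm using fun k : ℕ => hS k
  have hx_ne : ∀ k, x k ≠ 0 := fun k =>
    norm_pos_iff.1 ((Nat.cast_nonneg k).trans_lt (hx_norm k))
  have hx_sphere : ∀ k, ‖x k‖⁻¹ • x k ∈ sphere (0 : E) 1 := fun k => by
    simpa using norm_smul_inv_norm (𝕜 := ℝ) (hx_ne k)
  obtain ⟨d, hd_sphere, φ, hφ, hd⟩ := (isCompact_sphere (0 : E) 1).tendsto_subseq hx_sphere
  have ht : Tendsto (fun k => ‖x (φ k)‖) atTop atTop :=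
    tendsto_atTop_mono (fun k => (hx_norm (φ k)).le)
      (tendsto_natCast_atTop_atTop.comp hφ.tendsto_atTop)
  have hd0 : d = 0 := h ⟨⟨_, _, ht, fun k => (hxS (φ k)).1, hd⟩,
    asympFun_nonpos_of_tendsto_inv_smul ht (fun k => (hxS (φ k)).2) hd⟩
  simp [hd0] at hd_sphere

theorem asympCone_inter_subset_of_isBounded_argmin {f : E → EReal} {X : Set E}
    (hXcl : IsClosed X) (hXconv : Convex ℝ X) (hconv : ERealConvexFn f)
    (hlsc : LowerSemicontinuous f) {xs : E}
    (hxs : xs ∈ {x ∈ X | ∀ y ∈ X, f x ≤ f y}) (hxs_bot : f xs ≠ ⊥)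
    (hbdd : Bornology.IsBounded {x ∈ X | ∀ y ∈ X, f x ≤ f y}) :
    asympCone X ∩ {d | asympFun f d ≤ 0} ⊆ {0} := by
  rintro d ⟨hdX, hdf⟩
  refine eq_zero_of_isBounded_of_forall_add_smul_mem (x := xs) hbdd fun s hs => ?_
  exact ⟨add_smul_mem_of_mem_asympCone hXcl hXconv hxs.1 hdX hs, fun y hy =>
    (hconv.le_of_asympFun_nonpos hlsc hdf hxs_bot hs).trans (hxs.2 y hy)⟩

theorem stmt5_general {n : ℕ} (f : EuclideanSpace ℝ (Fin n) → EReal)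
    (X : Set (EuclideanSpace ℝ (Fin n)))
    (hXcl : IsClosed X) (hXconv : Convex ℝ X)
    (hproper : ERealProper f) (hlsc : LowerSemicontinuous f) (hconv : ERealConvexFn f)
    (hunb : ¬ Bornology.IsBounded ({x | f x ≠ ⊤} ∩ X)) :
    asympCone X ∩ {d | asympFun f d ≤ 0} = {0} ↔
      (({x ∈ X | ∀ y ∈ X, f x ≤ f y}).Nonempty ∧
        IsCompact {x ∈ X | ∀ y ∈ X, f x ≤ f y}) := by
  obtain ⟨x₀, hx₀_top, hx₀X⟩ := Bornology.nonempty_of_not_isBounded hunb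
  obtain ⟨r, hr⟩ : ∃ r : ℝ, f x₀ = r :=
    ⟨(f x₀).toReal, (EReal.coe_toReal hx₀_top (hproper.1 x₀)).symm⟩
  constructor
  · intro h
    refine nonempty_and_isCompact_argmin_of_isCompact_sublevel hXcl hlsc hx₀X ?_
    rw [hr]
    exact isCompact_of_isClosed_isBounded (hXcl.inter (hlsc.isClosed_preimage _))
      (isBounded_inter_sublevel_of_asympCone_inter_subset h.subset r)
  · rintro ⟨⟨xs, hxs⟩, hcompact⟩
    refine (asympCone_inter_subset_of_isBounded_argmin hXcl hXconv hconv hlsc hxs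
      (hproper.1 xs) hcompact.isBounded).antisymm ?_
    rintro _ rfl
    exact ⟨zero_mem_asympCone ⟨x₀, hx₀X⟩, asympFun_zero_nonpos hr⟩

theorem stmt5 {n : ℕ} (f : EuclideanSpace ℝ (Fin n) → EReal)
    (X : Set (EuclideanSpace ℝ (Fin n)))
    (hne : X.Nonempty) (hXcl : IsClosed X) (hXconv : Convex ℝ X)
    (hproper : ERealProper f) (hlsc : LowerSemicontinuous f) (hconv : ERealConvexFn f)
    (hunb : ¬ Bornology.IsBounded ({x | f x ≠ ⊤} ∩ X)) :
    asympCone X ∩ {d | asympFun f d ≤ 0} = {0} ↔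
      (({x ∈ X | ∀ y ∈ X, f x ≤ f y}).Nonempty ∧
        IsCompact {x ∈ X | ∀ y ∈ X, f x ≤ f y}) :=
  stmt5_general f X hXcl hXconv hproper hlsc hconv hunb
end
end

section
/- Let f(x) = ⟨c, x⟩ + β be an affine function on ℝⁿ and X ⊆ ℝⁿ closed convex with f bounded from below on X. If there exist sequences xₖ ∈ X with ‖xₖ‖ → ∞ and x*ₖ in the normal cone N_X(xₖ) with x*ₖ → −c, and xₖ/‖xₖ‖ → v, then v ∈ X^∞, ‖v‖ = 1, and ⟨c, v⟩ ≤ 0, so that X^∞ ∩ {d : ⟨c, d⟩ ≤ 0} ≠ {0}. -/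
open Filter Topology Metric Set RealInnerProductSpace

noncomputable section

variable {E : Type*} [NormedAddCommGroup E] [InnerProductSpace ℝ E]

def normalCone (X : Set E) (x : E) : Set E :=
  {s | ∀ y ∈ X, ⟪s, y - x⟫ ≤ 0}

theorem mem_asympCone_of_tendsto_inv_norm_smul {X : Set E} {x : ℕ → E} {v : E}
    (hx : ∀ k, x k ∈ X) (hnorm : Tendsto (fun k => ‖x k‖) atTop atTop)
    (hv : Tendsto (fun k => ‖x k‖⁻¹ • x k) atTop (𝓝 v)) : v ∈ asympCone X :=
  ⟨fun k => ‖x k‖, x, hnorm, hx, hv⟩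

theorem norm_eq_one_of_tendsto_inv_norm_smul {F : Type*} [NormedAddCommGroup F]
    [NormedSpace ℝ F] {x : ℕ → F} {v : F} (hnorm : Tendsto (fun k => ‖x k‖) atTop atTop)
    (hv : Tendsto (fun k => ‖x k‖⁻¹ • x k) atTop (𝓝 v)) : ‖v‖ = 1 := by
  have hunit : ∀ᶠ k in atTop, ‖‖x k‖⁻¹ • x k‖ = 1 := by
    filter_upwards [hnorm.eventually_gt_atTop 0] with k hk
    exact norm_smul_inv_norm (norm_pos_iff.mp hk)
  exact tendsto_nhds_unique hv.norm (tendsto_const_nhds.congr' (hunit.mono fun _ h => h.symm))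

/-- `0 ≤ ⟪s k, ‖x k‖⁻¹ • (x k - y)⟫` for every `k`, and this tends to `⟪w, v⟫`. -/
theorem inner_nonneg_of_tendsto_normalCone {X : Set E} {x s : ℕ → E} {y w v : E}
    (hy : y ∈ X) (hs : ∀ k, s k ∈ normalCone X (x k))
    (hnorm : Tendsto (fun k => ‖x k‖) atTop atTop) (hsw : Tendsto s atTop (𝓝 w))
    (hv : Tendsto (fun k => ‖x k‖⁻¹ • x k) atTop (𝓝 v)) : 0 ≤ ⟪w, v⟫ := by
  have hy0 : Tendsto (fun k => ‖x k‖⁻¹ • y) atTop (𝓝 0) := by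
    simpa using (tendsto_inv_atTop_zero.comp hnorm).smul_const y
  have hlim : Tendsto (fun k => ⟪s k, ‖x k‖⁻¹ • x k - ‖x k‖⁻¹ • y⟫) atTop (𝓝 ⟪w, v⟫) := by
    simpa using hsw.inner (hv.sub hy0)
  refine ge_of_tendsto' hlim fun k => ?_
  have hk : 0 ≤ ⟪s k, x k - y⟫ := by
    have := hs k y hy
    rw [inner_sub_right] at this ⊢
    linarith
  rw [← smul_sub, real_inner_smul_right]
  exact mul_nonneg (inv_nonneg.mpr (norm_nonneg _)) hk

theorem stmt7_general {n : ℕ} (c : EuclideanSpace ℝ (Fin n))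
    (X : Set (EuclideanSpace ℝ (Fin n)))
    (xk : ℕ → EuclideanSpace ℝ (Fin n)) (hxk : ∀ k, xk k ∈ X)
    (hnorm : Tendsto (fun k => ‖xk k‖) atTop atTop)
    (xs : ℕ → EuclideanSpace ℝ (Fin n))
    (hxs : ∀ k, ∀ y ∈ X, (inner ℝ (xs k) (y - xk k) : ℝ) ≤ 0)
    (hxsc : Tendsto xs atTop (𝓝 (-c)))
    (v : EuclideanSpace ℝ (Fin n))
    (hvlim : Tendsto (fun k => ‖xk k‖⁻¹ • xk k) atTop (𝓝 v)) :
    v ∈ asympCone X ∧ ‖v‖ = 1 ∧ (inner ℝ c (v) : ℝ) ≤ 0 ∧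
      asympCone X ∩ {d | (inner ℝ c (d) : ℝ) ≤ 0} ≠ {0} := by
  have hmem : v ∈ asympCone X := mem_asympCone_of_tendsto_inv_norm_smul hxk hnorm hvlim
  have hv1 : ‖v‖ = 1 := norm_eq_one_of_tendsto_inv_norm_smul hnorm hvlim
  have hcv : ⟪c, v⟫ ≤ 0 := by
    have := inner_nonneg_of_tendsto_normalCone (hxk 0) hxs hnorm hxsc hvlim
    rwa [inner_neg_left, neg_nonneg] at this
  have hv0 : v ≠ 0 := norm_ne_zero_iff.mp (by simp [hv1])
  exact ⟨hmem, hv1, hcv, ne_of_mem_of_not_mem' (show v ∈ _ from ⟨hmem, hcv⟩) hv0⟩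

theorem stmt7 {n : ℕ} (c : EuclideanSpace ℝ (Fin n)) (β : ℝ)
    (X : Set (EuclideanSpace ℝ (Fin n)))
    (hXcl : IsClosed X) (hXconv : Convex ℝ X)
    (hbd : ∃ m : ℝ, ∀ x ∈ X, m ≤ (inner ℝ c (x) : ℝ) + β)
    (xk : ℕ → EuclideanSpace ℝ (Fin n)) (hxk : ∀ k, xk k ∈ X)
    (hnorm : Tendsto (fun k => ‖xk k‖) atTop atTop)
    (xs : ℕ → EuclideanSpace ℝ (Fin n))
    (hxs : ∀ k, ∀ y ∈ X, (inner ℝ (xs k) (y - xk k) : ℝ) ≤ 0)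
    (hxsc : Tendsto xs atTop (𝓝 (-c)))
    (v : EuclideanSpace ℝ (Fin n))
    (hvlim : Tendsto (fun k => ‖xk k‖⁻¹ • xk k) atTop (𝓝 v)) :
    v ∈ asympCone X ∧ ‖v‖ = 1 ∧ (inner ℝ c (v) : ℝ) ≤ 0 ∧
      asympCone X ∩ {d | (inner ℝ c (d) : ℝ) ≤ 0} ≠ {0} :=
  stmt7_general c X xk hxk hnorm xs hxs hxsc v hvlim
end
end

section
/- Let f : ℝⁿ → ℝ ∪ {+∞} be proper lsc, X ⊆ ℝⁿ closed with dom f ∩ X unbounded, and assume X^∞ ∩ {d : f^∞(d) ≤ 0} = {0}. Then there exists ε > 0 such that for all u with ‖u‖ < ε one has X^∞ ∩ {d : (f_u)^∞(d) ≤ 0} = {0}, where f_u(x) = f(x) − ⟨u, x⟩. -/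
open Filter Topology Metric Set RealInnerProductSpace

noncomputable section

variable {E : Type*} [NormedAddCommGroup E] [InnerProductSpace ℝ E]

/-! The asymptotic cone is closed and the asymptotic function is lower semicontinuous, so on the
compact set of unit vectors of `X^∞` the function `f^∞` attains its minimum, which is positive by
hypothesis; pick `ε` below it. Tilting `f` by `u` shifts `f^∞` by the linear form `⟪u, ·⟫`, which is
at most `‖u‖ < ε` on unit vectors, so `(f_u)^∞` stays positive on the unit vectors of `X^∞`, hence by
positive homogeneity on all of `X^∞ \ {0}`. -/

namespace EReal

lemma liminf_add_coe_of_tendsto {α : Type*} {l : Filter α} [NeBot l] (a : α → EReal)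
    {c : α → ℝ} {c₀ : ℝ} (hc : Tendsto c l (𝓝 c₀)) :
    liminf (fun k => a k + (c k : EReal)) l = liminf a l + (c₀ : EReal) := by
  have hc' : Tendsto (fun k => (c k : EReal)) l (𝓝 (c₀ : EReal)) := tendsto_coe.2 hc
  apply le_antisymm
  · have := liminf_add_le (f := l) (u := fun k => (c k : EReal)) (v := a)
      (by rw [hc'.limsup_eq]; exact Or.inl (coe_ne_bot _))
      (by rw [hc'.limsup_eq]; exact Or.inl (coe_ne_top _))
    rw [hc'.limsup_eq] at this
    calc liminf (fun k => a k + (c k : EReal)) l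
        = liminf ((fun k => (c k : EReal)) + a) l := by congr 1; funext k; exact add_comm _ _
      _ ≤ (c₀ : EReal) + liminf a l := this
      _ = liminf a l + (c₀ : EReal) := add_comm _ _
  · have := le_liminf_add (f := l) (u := a) (v := fun k => (c k : EReal))
    rwa [hc'.liminf_eq] at this

lemma continuous_sub_coe (r : ℝ) : Continuous fun x : EReal => x - r := by
  have hsub : (fun x : EReal => x - r) = fun x => x + ((-r : ℝ) : EReal) := by
    funext x; rw [coe_neg, sub_eq_add_neg]
  rw [hsub, continuous_iff_continuousAt]
  intro x
  exact (continuousAt_add (p := (x, ((-r : ℝ) : EReal))) (Or.inr (coe_ne_bot _))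
    (Or.inr (coe_ne_top _))).comp (f := fun y : EReal => (y, ((-r : ℝ) : EReal)))
    (continuous_id.prodMk continuous_const).continuousAt

end EReal

lemma tendsto_of_dist_lt_one_div {F : Type*} [PseudoMetricSpace F] {a b : ℕ → F} {x : F}
    (ha : Tendsto a atTop (𝓝 x))
    (hab : ∀ k, dist (b k) (a k) < 1 / ((k : ℝ) + 1)) : Tendsto b atTop (𝓝 x) :=
  ha.congr_dist <| squeeze_zero (fun _ => dist_nonneg)
    (fun k => (dist_comm (a k) (b k)).trans_le (hab k).le)
    tendsto_one_div_add_atTop_nhds_zero_nat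

lemma smul_mem_asympCone {X : Set E} {d : E} (hd : d ∈ asympCone X) {c : ℝ} (hc : 0 < c) :
    c • d ∈ asympCone X := by
  obtain ⟨t, x, ht, hx, hlim⟩ := hd
  refine ⟨fun k => c⁻¹ * t k, x, ht.const_mul_atTop (inv_pos.2 hc), hx, ?_⟩
  have hterm : ∀ k, c • ((t k)⁻¹ • x k) = (c⁻¹ * t k)⁻¹ • x k := fun k => by
    rw [mul_inv_rev, inv_inv, smul_smul, mul_comm]
  exact (hlim.const_smul c).congr hterm

lemma isClosed_asympCone (X : Set E) : IsClosed (asympCone X) := by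
  refine IsSeqClosed.isClosed fun ej e hej hlim => ?_
  have H : ∀ j : ℕ, ∃ (T : ℝ) (Y : E), Y ∈ X ∧ (j : ℝ) ≤ T ∧
      dist (T⁻¹ • Y) (ej j) < 1 / ((j : ℝ) + 1) := fun j => by
    obtain ⟨t, x, ht, hx, hx_lim⟩ := hej j
    obtain ⟨m, hm⟩ := ((ht.eventually_ge_atTop _).and
      (Metric.tendsto_nhds.1 hx_lim (1 / ((j : ℝ) + 1)) (by positivity))).exists
    exact ⟨t m, x m, hx m, hm⟩
  choose T Y hY hT hdist using H
  exact ⟨T, Y, tendsto_atTop_mono hT tendsto_natCast_atTop_atTop, hY,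
    tendsto_of_dist_lt_one_div hlim hdist⟩

section AsympFun

variable (f : E → EReal)

lemma asympFun_smul_le {c : ℝ} (hc : 0 < c) (d : E) :
    asympFun f (c • d) ≤ (c : EReal) * asympFun f d := by
  rw [← EReal.div_le_iff_le_mul (by exact_mod_cast hc) (EReal.coe_ne_top c)]
  refine le_sInf ?_
  rintro _ ⟨t, dk, ht, hdk, rfl⟩
  rw [EReal.div_le_iff_le_mul (by exact_mod_cast hc) (EReal.coe_ne_top c),
    ← EReal.liminf_const_mul_of_nonneg_of_ne_top (by exact_mod_cast hc.le) (EReal.coe_ne_top c)]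
  refine sInf_le ⟨fun k => c⁻¹ * t k, fun k => c • dk k, ht.const_mul_atTop (inv_pos.2 hc),
    hdk.const_smul c, liminf_congr (Eventually.of_forall fun k => ?_)⟩
  have htimes : (c⁻¹ * t k) * c = t k := by field_simp
  have hinv : (c⁻¹ * t k)⁻¹ = c * (t k)⁻¹ := by rw [mul_inv_rev, inv_inv, mul_comm]
  simp only [smul_smul, htimes, hinv, EReal.coe_mul, mul_assoc]

lemma liminf_mul_sub_inner (u : E) {t : ℕ → ℝ} {dk : ℕ → E} {d : E}
    (ht : Tendsto t atTop atTop) (hdk : Tendsto dk atTop (𝓝 d)) :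
    liminf (fun k => (((t k)⁻¹ : ℝ) : EReal) * (f (t k • dk k) - ((⟪u, t k • dk k⟫ : ℝ) : EReal)))
        atTop
      = liminf (fun k => (((t k)⁻¹ : ℝ) : EReal) * f (t k • dk k)) atTop
        - ((⟪u, d⟫ : ℝ) : EReal) := by
  have hterm : ∀ᶠ k in atTop,
      (((t k)⁻¹ : ℝ) : EReal) * (f (t k • dk k) - ((⟪u, t k • dk k⟫ : ℝ) : EReal))
        = (((t k)⁻¹ : ℝ) : EReal) * f (t k • dk k) + ((-⟪u, dk k⟫ : ℝ) : EReal) := by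
    filter_upwards [ht.eventually_gt_atTop 0] with k hk
    rw [EReal.mul_sub_of_nonneg_of_ne_top (by exact_mod_cast (inv_pos.2 hk).le)
      (EReal.coe_ne_top _), real_inner_smul_right, ← EReal.coe_mul, inv_mul_cancel_left₀ hk.ne',
      EReal.coe_neg, sub_eq_add_neg]
  rw [liminf_congr hterm, EReal.liminf_add_coe_of_tendsto _ (tendsto_const_nhds.inner hdk).neg,
    EReal.coe_neg, sub_eq_add_neg]

lemma asympFun_sub_inner (u d : E) :
    asympFun (fun x => f x - ((⟪u, x⟫ : ℝ) : EReal)) d = asympFun f d - ((⟪u, d⟫ : ℝ) : EReal) := by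
  have hmono : Monotone fun x : EReal => x - ((⟪u, d⟫ : ℝ) : EReal) :=
    fun _ _ h => EReal.sub_le_sub h le_rfl
  rw [asympFun, asympFun, hmono.map_sInf_of_continuousAt
    (EReal.continuous_sub_coe _).continuousAt (EReal.top_sub_coe _)]
  congr 1
  ext L
  constructor
  · rintro ⟨t, dk, ht, hdk, rfl⟩
    exact ⟨_, ⟨t, dk, ht, hdk, rfl⟩, (liminf_mul_sub_inner f u ht hdk).symm⟩
  · rintro ⟨_, ⟨t, dk, ht, hdk, rfl⟩, rfl⟩
    exact ⟨t, dk, ht, hdk, (liminf_mul_sub_inner f u ht hdk).symm⟩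

lemma asympFun_le_of_tendsto {e : E} {ek : ℕ → E} {c : EReal} (hek : Tendsto ek atTop (𝓝 e))
    (h : ∀ k, asympFun f (ek k) < c) : asympFun f e ≤ c := by
  have H : ∀ k : ℕ, ∃ (T : ℝ) (D : E), (k : ℝ) ≤ T ∧ dist D (ek k) < 1 / ((k : ℝ) + 1) ∧
      ((T⁻¹ : ℝ) : EReal) * f (T • D) < c := fun k => by
    obtain ⟨_, ⟨t, dk, ht, hdk, rfl⟩, hlt⟩ := sInf_lt_iff.1 (h k)
    obtain ⟨m, hm_lt, hm⟩ := ((frequently_lt_of_liminf_lt (by isBoundedDefault) hlt).and_eventually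
      ((ht.eventually_ge_atTop _).and
        (Metric.tendsto_nhds.1 hdk (1 / ((k : ℝ) + 1)) (by positivity)))).exists
    exact ⟨t m, dk m, hm.1, hm.2, hm_lt⟩
  choose T D hT hdist hval using H
  calc asympFun f e ≤ liminf (fun k => (((T k)⁻¹ : ℝ) : EReal) * f (T k • D k)) atTop :=
        sInf_le ⟨T, D, tendsto_atTop_mono hT tendsto_natCast_atTop_atTop,
          tendsto_of_dist_lt_one_div hek hdist, rfl⟩
    _ ≤ c := liminf_le_of_frequently_le' (Frequently.of_forall fun k => (hval k).le)

lemma lowerSemicontinuous_asympFun : LowerSemicontinuous (asympFun f) := by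
  refine lowerSemicontinuous_iff_isClosed_preimage.2 fun y =>
    IsSeqClosed.isClosed fun ek e hek hlim => ?_
  exact le_of_forall_gt_imp_ge_of_dense fun c hc =>
    asympFun_le_of_tendsto f hlim fun k => (hek k).trans_lt hc

end AsympFun

lemma exists_pos_le_asympFun_of_norm_eq_one [ProperSpace E] {f : E → EReal} {X : Set E}
    (hcone : asympCone X ∩ {d | asympFun f d ≤ 0} = {0}) :
    ∃ ε > (0 : ℝ), ∀ d ∈ asympCone X, ‖d‖ = 1 → (ε : EReal) ≤ asympFun f d := by
  rcases (asympCone X ∩ sphere 0 1).eq_empty_or_nonempty with hK | hK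
  · refine ⟨1, one_pos, fun d hd hd1 => ?_⟩
    exact absurd (hK.subset ⟨hd, mem_sphere_zero_iff_norm.2 hd1⟩) (notMem_empty d)
  obtain ⟨a, ⟨haX, ha1⟩, hmin⟩ := ((lowerSemicontinuous_asympFun f).lowerSemicontinuousOn
    _).exists_isMinOn hK ((isCompact_sphere 0 1).inter_left (isClosed_asympCone X))
  have hpos : 0 < asympFun f a := by
    by_contra! hle
    have ha0 : a = 0 := hcone.subset ⟨haX, hle⟩
    simp [ha0] at ha1
  obtain ⟨ε, hε, hεa⟩ := EReal.lt_iff_exists_real_btwn.1 hpos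
  exact ⟨ε, EReal.coe_pos.1 hε, fun d hd hd1 =>
    hεa.le.trans (hmin ⟨hd, mem_sphere_zero_iff_norm.2 hd1⟩)⟩

theorem stmt9_general {n : ℕ} (f : EuclideanSpace ℝ (Fin n) → EReal)
    (X : Set (EuclideanSpace ℝ (Fin n)))
    (hcone : asympCone X ∩ {d | asympFun f d ≤ 0} = {0}) :
    ∃ ε > (0:ℝ), ∀ u : EuclideanSpace ℝ (Fin n), ‖u‖ < ε →
      asympCone X ∩
        {d | asympFun (fun x => f x - ((inner ℝ u x : ℝ) : EReal)) d ≤ 0} = {0} := by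
  obtain ⟨ε, hε, hunit⟩ := exists_pos_le_asympFun_of_norm_eq_one hcone
  refine ⟨ε, hε, fun u hu => subset_antisymm ?_ ?_⟩
  · rintro d ⟨hdX, hdu⟩
    by_contra hd0
    set e := ‖d‖⁻¹ • d
    have he : ‖e‖ = 1 := norm_smul_inv_norm hd0
    have heu : asympFun f e ≤ ((⟪u, e⟫ : ℝ) : EReal) := by
      rw [← EReal.sub_nonpos, ← asympFun_sub_inner]
      exact (asympFun_smul_le _ (inv_pos.2 (norm_pos_iff.2 hd0)) d).trans
        (EReal.mul_nonpos_iff.2 (Or.inl ⟨by positivity, hdu⟩))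
    have hεu : ε ≤ ⟪u, e⟫ :=
      EReal.coe_le_coe_iff.1 ((hunit e (smul_mem_asympCone hdX (by positivity)) he).trans heu)
    have hue : ⟪u, e⟫ ≤ ‖u‖ := by simpa [he] using real_inner_le_norm u e
    linarith
  · rintro _ rfl
    obtain ⟨h0X, h0f⟩ := hcone.superset rfl
    refine ⟨h0X, ?_⟩
    simpa [asympFun_sub_inner] using h0f

theorem stmt9 {n : ℕ} (f : EuclideanSpace ℝ (Fin n) → EReal)
    (X : Set (EuclideanSpace ℝ (Fin n)))
    (hproper : ERealProper f) (hlsc : LowerSemicontinuous f) (hX : IsClosed X)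
    (hunb : ¬ Bornology.IsBounded ({x | f x ≠ ⊤} ∩ X))
    (hcone : asympCone X ∩ {d | asympFun f d ≤ 0} = {0}) :
    ∃ ε > (0:ℝ), ∀ u : EuclideanSpace ℝ (Fin n), ‖u‖ < ε →
      asympCone X ∩
        {d | asympFun (fun x => f x - ((inner ℝ u x : ℝ) : EReal)) d ≤ 0} = {0} :=
  stmt9_general f X hcone
end
end

section
/- Let f : ℝⁿ → ℝ ∪ {+∞} be proper lsc, X ⊆ ℝⁿ closed with dom f ∩ X unbounded, and assume X^∞ ∩ {d : f^∞(d) ≤ 0} = {0}. Then the solution map u ↦ Sol(u) := argmin_{x∈X}(f(x) − ⟨u,x⟩) is upper semicontinuous at 0: for every open V ⊇ Sol(0) there is δ > 0 such that Sol(u) ⊆ V whenever ‖u‖ < δ. -/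
open Filter Topology Metric Set RealInnerProductSpace

noncomputable section

variable {E : Type*} [NormedAddCommGroup E] [InnerProductSpace ℝ E]

/-! If `x k ∈ Sol f X (u k)` with `u k → 0` all avoid `V`, either `‖x k‖ → ∞`, and then the
normalized points `x k / ‖x k‖` accumulate at a unit vector `d ∈ X^∞`; dividing the optimality
inequality `f (x k) ≤ f y₀ + ⟪u k, x k - y₀⟫` by `‖x k‖` gives `f^∞ d ≤ 0`, contradicting the
recession condition. Or a subsequence converges, and by lower semicontinuity its limit is in
`Sol f X 0 \ V`. -/

lemma EReal.sub_coe_le_coe_sub_coe_iff (a : EReal) (b s c : ℝ) :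
    a - b ≤ (s : EReal) - c ↔ a ≤ ((s - c + b : ℝ) : EReal) := by
  rw [← EReal.coe_sub, EReal.sub_le_iff_le_add (Or.inl (EReal.coe_ne_bot _))
    (Or.inl (EReal.coe_ne_top _)), ← EReal.coe_add]

lemma exists_tendsto_subseq_of_not_tendsto_norm_atTop {F : Type*} [NormedAddCommGroup F]
    [ProperSpace F] {x : ℕ → F} (hx : ¬ Tendsto (fun k => ‖x k‖) atTop atTop) :
    ∃ a, ∃ φ : ℕ → ℕ, StrictMono φ ∧ Tendsto (x ∘ φ) atTop (𝓝 a) := by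
  simp only [Filter.tendsto_atTop, not_forall, not_eventually, not_le] at hx
  obtain ⟨C, hC⟩ := hx
  obtain ⟨a, -, hφ⟩ := tendsto_subseq_of_frequently_bounded (isBounded_closedBall (x := 0))
    (hC.mono fun k hk => mem_closedBall_zero_iff.2 hk.le)
  exact ⟨a, hφ⟩

namespace Sol

variable {f : E → EReal} {X : Set E}

lemma le_of_mem {u z y : E} (hz : z ∈ Sol f X u) (hy : y ∈ X) {s : ℝ} (hs : f y = s) :
    f z ≤ ((s - ⟪u, y⟫ + ⟪u, z⟫ : ℝ) : EReal) :=
  (EReal.sub_coe_le_coe_sub_coe_iff _ _ _ _).1 (hs ▸ hz.2 y hy)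

lemma mem_of_forall_le (hbot : ∀ x, f x ≠ ⊥) {u z : E} (hz : z ∈ X)
    (h : ∀ y ∈ X, ∀ s : ℝ, f y = s → f z ≤ ((s - ⟪u, y⟫ + ⟪u, z⟫ : ℝ) : EReal)) :
    z ∈ Sol f X u := by
  refine ⟨hz, fun y hy => ?_⟩
  induction hfy : f y using EReal.rec with
  | bot => exact absurd hfy (hbot y)
  | top => rw [EReal.top_sub_coe]; exact le_top
  | coe s => exact (EReal.sub_coe_le_coe_sub_coe_iff _ _ _ _).2 (h y hy s hfy)

lemma mem_of_tendsto (hbot : ∀ x, f x ≠ ⊥) (hf : LowerSemicontinuous f) (hX : IsClosed X)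
    {ι : Type*} {l : Filter ι} [l.NeBot] {u x : ι → E} {u₀ x₀ : E}
    (hsol : ∀ i, x i ∈ Sol f X (u i)) (hu : Tendsto u l (𝓝 u₀)) (hx : Tendsto x l (𝓝 x₀)) :
    x₀ ∈ Sol f X u₀ := by
  refine mem_of_forall_le hbot (hX.mem_of_tendsto hx (.of_forall fun i => (hsol i).1))
    fun y hy s hs => ?_
  have hlim : Tendsto (fun i => s - ⟪u i, y⟫ + ⟪u i, x i⟫) l (𝓝 (s - ⟪u₀, y⟫ + ⟪u₀, x₀⟫)) :=
    (tendsto_const_nhds.sub (hu.inner tendsto_const_nhds)).add (hu.inner hx)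
  calc f x₀ ≤ liminf f (𝓝 x₀) := hf.le_liminf x₀
    _ ≤ liminf (f ∘ x) l := by rw [liminf_comp]; exact liminf_le_liminf_of_le hx
    _ ≤ liminf (fun i => ((s - ⟪u i, y⟫ + ⟪u i, x i⟫ : ℝ) : EReal)) l :=
      liminf_le_liminf (.of_forall fun i => le_of_mem (hsol i) hy hs)
    _ = _ := ((continuous_coe_real_ereal.tendsto _).comp hlim).liminf_eq

end Sol

lemma asympFun_le_liminf {f : E → EReal} {t : ℕ → ℝ} {x : ℕ → E} {d : E}
    (ht : Tendsto t atTop atTop) (hx : Tendsto (fun k => (t k)⁻¹ • x k) atTop (𝓝 d)) :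
    asympFun f d ≤ liminf (fun k => (((t k)⁻¹ : ℝ) : EReal) * f (x k)) atTop := by
  refine sInf_le ⟨t, _, ht, hx, liminf_congr ?_⟩
  filter_upwards [ht.eventually_ne_atTop 0] with k hk
  rw [smul_inv_smul₀ hk]

lemma asympFun_le_zero_of_mem_Sol {f : E → EReal} {X : Set E} {y₀ : E} (hy₀ : y₀ ∈ X) {r : ℝ}
    (hr : f y₀ = r) {u x : ℕ → E} {d : E} (hsol : ∀ k, x k ∈ Sol f X (u k))
    (hu : Tendsto u atTop (𝓝 0)) (hx : Tendsto (fun k => ‖x k‖) atTop atTop)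
    (hd : Tendsto (fun k => ‖x k‖⁻¹ • x k) atTop (𝓝 d)) : asympFun f d ≤ 0 := by
  set g : ℕ → ℝ := fun k => ‖x k‖⁻¹ * (r - ⟪u k, y₀⟫) + ⟪u k, ‖x k‖⁻¹ • x k⟫
  have hg : Tendsto g atTop (𝓝 0) := by
    have h : Tendsto g atTop (𝓝 (0 * (r - ⟪(0 : E), y₀⟫) + ⟪(0 : E), d⟫)) :=
      (hx.inv_tendsto_atTop.mul (tendsto_const_nhds.sub (hu.inner tendsto_const_nhds))).add
        (hu.inner hd)
    simpa using h
  calc asympFun f d ≤ liminf (fun k => ((‖x k‖⁻¹ : ℝ) : EReal) * f (x k)) atTop :=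
        asympFun_le_liminf hx hd
    _ ≤ liminf (fun k => ((g k : ℝ) : EReal)) atTop := by
      refine liminf_le_liminf (.of_forall fun k => ?_)
      calc ((‖x k‖⁻¹ : ℝ) : EReal) * f (x k)
          ≤ ((‖x k‖⁻¹ : ℝ) : EReal) * ((r - ⟪u k, y₀⟫ + ⟪u k, x k⟫ : ℝ) : EReal) :=
            mul_le_mul_of_nonneg_left (Sol.le_of_mem (hsol k) hy₀ hr)
              (EReal.coe_nonneg.2 (inv_nonneg.2 (norm_nonneg _)))
        _ = ((g k : ℝ) : EReal) := by
          rw [← EReal.coe_mul, mul_add]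
          simp only [g, real_inner_smul_right]
    _ = 0 := ((continuous_coe_real_ereal.tendsto 0).comp hg).liminf_eq

lemma not_tendsto_norm_atTop_of_mem_Sol [ProperSpace E] {f : E → EReal} {X : Set E}
    (hcone : ∀ d ∈ asympCone X, asympFun f d ≤ 0 → d = 0) {y₀ : E} (hy₀ : y₀ ∈ X)
    {r : ℝ} (hr : f y₀ = r) {u x : ℕ → E} (hsol : ∀ k, x k ∈ Sol f X (u k))
    (hu : Tendsto u atTop (𝓝 0)) : ¬ Tendsto (fun k => ‖x k‖) atTop atTop := by
  intro hx
  have hball : ∀ k, ‖x k‖⁻¹ • x k ∈ closedBall (0 : E) 1 := fun k => by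
    rw [mem_closedBall_zero_iff, norm_smul, norm_inv, norm_norm]
    exact inv_mul_le_one_of_le₀ le_rfl (norm_nonneg _)
  obtain ⟨d, -, φ, hφ, hd⟩ := tendsto_subseq_of_bounded isBounded_closedBall hball
  have hxφ : Tendsto (fun k => ‖x (φ k)‖) atTop atTop := hx.comp hφ.tendsto_atTop
  have hd_sphere : d ∈ sphere (0 : E) 1 := by
    refine isClosed_sphere.mem_of_tendsto hd ?_
    filter_upwards [hxφ.eventually_gt_atTop 0] with k hk
    rw [Function.comp_apply, mem_sphere_zero_iff_norm, norm_smul, norm_inv, norm_norm,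
      inv_mul_cancel₀ hk.ne']
  have hd_cone : d ∈ asympCone X := ⟨_, _, hxφ, fun k => (hsol (φ k)).1, hd⟩
  have hd_zero := hcone d hd_cone (asympFun_le_zero_of_mem_Sol hy₀ hr
    (fun k => hsol (φ k)) (hu.comp hφ.tendsto_atTop) hxφ hd)
  simp [hd_zero] at hd_sphere

theorem stmt11 {n : ℕ} (f : EuclideanSpace ℝ (Fin n) → EReal)
    (X : Set (EuclideanSpace ℝ (Fin n)))
    (hproper : ERealProper f) (hlsc : LowerSemicontinuous f) (hX : IsClosed X)
    (hunb : ¬ Bornology.IsBounded ({x | f x ≠ ⊤} ∩ X))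
    (hcone : asympCone X ∩ {d | asympFun f d ≤ 0} = {0}) :
    ∀ V : Set (EuclideanSpace ℝ (Fin n)), IsOpen V → Sol f X 0 ⊆ V →
      ∃ δ > (0:ℝ), ∀ u : EuclideanSpace ℝ (Fin n), ‖u‖ < δ → Sol f X u ⊆ V := by
  intro V hV hSV
  by_contra! hcon
  have H (k : ℕ) : ∃ u, ‖u‖ < 1 / (k + 1 : ℝ) ∧ ∃ x ∈ Sol f X u, x ∉ V := by
    obtain ⟨u, hu, hns⟩ := hcon (1 / (k + 1 : ℝ)) (by positivity)
    exact ⟨u, hu, Set.not_subset.1 hns⟩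
  choose u hu x hsol hxV using H
  have hu0 : Tendsto u atTop (𝓝 0) := tendsto_zero_iff_norm_tendsto_zero.2 <| squeeze_zero
    (fun k => norm_nonneg _) (fun k => (hu k).le) tendsto_one_div_add_atTop_nhds_zero_nat
  obtain ⟨y₀, hfy₀, hy₀⟩ := Bornology.nonempty_of_not_isBounded hunb
  have hbdd := not_tendsto_norm_atTop_of_mem_Sol (fun d hd hfd => hcone.subset ⟨hd, hfd⟩)
    hy₀ (EReal.coe_toReal hfy₀ (hproper.1 y₀)).symm hsol hu0
  obtain ⟨z, φ, hφ, hxφ⟩ := exists_tendsto_subseq_of_not_tendsto_norm_atTop hbdd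
  have hz : z ∈ Sol f X 0 := Sol.mem_of_tendsto hproper.1 hlsc hX (fun k => hsol (φ k))
    (hu0.comp hφ.tendsto_atTop) hxφ
  exact hV.isClosed_compl.mem_of_tendsto hxφ (.of_forall fun k => hxV (φ k)) (hSV hz)
end
end

section
/- Let f : ℝⁿ → ℝ ∪ {+∞} be proper lsc, X ⊆ ℝⁿ closed with dom f ∩ X unbounded, and suppose X^∞ ∩ {d : f^∞(d) ≤ 0} = {0}. Then the optimal value function μ(u) = inf_{x∈X}(f(x) − ⟨u, x⟩) is lower semicontinuous at 0, hence continuous at 0. -/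
open Filter Topology Metric Set RealInnerProductSpace

noncomputable section

variable {E : Type*} [NormedAddCommGroup E] [InnerProductSpace ℝ E]

/-!
`valFn f X` is an infimum of functions continuous in `u`, hence upper semicontinuous. If it were
not lower semicontinuous at `0`, there would be `c < valFn f X 0`, `uₖ → 0` and `xₖ ∈ X` with
`f xₖ ≤ c + ⟪uₖ, xₖ⟫`. If `xₖ` does not escape to infinity, a subsequence converges to a point
of `X` where `f ≤ c` by lower semicontinuity. Otherwise `xₖ / ‖xₖ‖` accumulates at a unit vector
of `asympCone X` on which `asympFun f ≤ 0`, since `⟪uₖ, xₖ⟫ / ‖xₖ‖ → 0`; the cone condition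
excludes this.
-/
theorem EReal.continuous_sub_coe_s14 (a : EReal) : Continuous fun r : ℝ => a - r := by
  refine continuous_iff_continuousAt.2 fun r => ?_
  have hadd : ContinuousAt (fun p : EReal × EReal => p.1 + p.2) (a, ((-r : ℝ) : EReal)) :=
    EReal.continuousAt_add (.inr (EReal.coe_ne_bot _)) (.inr (EReal.coe_ne_top _))
  have hpair : Continuous fun s : ℝ => (a, ((-s : ℝ) : EReal)) :=
    continuous_const.prodMk (continuous_coe_real_ereal.comp continuous_neg)
  have := hadd.comp (x := r) hpair.continuousAt
  simpa only [Function.comp_def, EReal.coe_neg, ← sub_eq_add_neg] using this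

theorem EReal.sub_coe_le_iff_le_coe_add {a : EReal} {c r : ℝ} :
    a - (r : EReal) ≤ c ↔ a ≤ ((c + r : ℝ) : EReal) := by
  rw [EReal.sub_le_iff_le_add (.inl (EReal.coe_ne_bot _)) (.inl (EReal.coe_ne_top _)),
    EReal.coe_add]

theorem liminf_le_of_le_coe_of_tendsto {ι : Type*} {l : Filter ι} [l.NeBot] {a : ι → EReal}
    {b : ι → ℝ} {c : ℝ} (hab : ∀ᶠ i in l, a i ≤ b i) (hb : Tendsto b l (𝓝 c)) :
    liminf a l ≤ c := by
  calc liminf a l ≤ liminf (fun i => (b i : EReal)) l := liminf_le_liminf hab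
    _ = c := (continuous_coe_real_ereal.tendsto c |>.comp hb).liminf_eq

theorem upperSemicontinuous_valFn (f : E → EReal) (X : Set E) :
    UpperSemicontinuous (valFn f X) :=
  upperSemicontinuous_biInf fun x _ =>
    ((EReal.continuous_sub_coe_s14 (f x)).comp
      (continuous_id.inner continuous_const)).upperSemicontinuous

theorem valFn_zero_le {f : E → EReal} {X : Set E} {a : E} (ha : a ∈ X) : valFn f X 0 ≤ f a := by
  simpa [valFn] using iInf₂_le (f := fun x (_ : x ∈ X) => f x) a ha

theorem valFn_zero_le_of_tendsto {f : E → EReal} {X : Set E} (hlsc : LowerSemicontinuous f)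
    (hX : IsClosed X) {u x : ℕ → E} {a : E} {c : ℝ} (hu : Tendsto u atTop (𝓝 0))
    (hx : Tendsto x atTop (𝓝 a)) (hxX : ∀ k, x k ∈ X)
    (hfx : ∀ k, f (x k) ≤ ((c + ⟪u k, x k⟫ : ℝ) : EReal)) :
    valFn f X 0 ≤ c := by
  have haX : a ∈ X := hX.mem_of_tendsto hx (.of_forall hxX)
  have hbound : Tendsto (fun k => c + ⟪u k, x k⟫) atTop (𝓝 c) := by
    simpa using tendsto_const_nhds.add (hu.inner (𝕜 := ℝ) hx)
  calc valFn f X 0 ≤ f a := valFn_zero_le haX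
    _ ≤ liminf f (𝓝 a) := hlsc.le_liminf a
    _ ≤ liminf (f ∘ x) atTop := hx.liminf_le_liminf_comp
    _ ≤ c := liminf_le_of_le_coe_of_tendsto (.of_forall hfx) hbound

theorem exists_ne_zero_mem_asympCone_asympFun_nonpos [ProperSpace E] {f : E → EReal} {X : Set E}
    {u x : ℕ → E} {c : ℝ} (hu : Tendsto u atTop (𝓝 0)) (hxX : ∀ k, x k ∈ X)
    (hfx : ∀ k, f (x k) ≤ ((c + ⟪u k, x k⟫ : ℝ) : EReal))
    (hx : Tendsto (fun k => ‖x k‖) atTop atTop) :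
    ∃ a ≠ 0, a ∈ asympCone X ∧ asympFun f a ≤ 0 := by
  set t := fun k => ‖x k‖
  set d := fun k => (t k)⁻¹ • x k
  have hd_norm : ∀ k, ‖d k‖ ≤ 1 := fun k => by
    simpa [d, t, norm_smul] using inv_mul_le_one_of_le₀ le_rfl (norm_nonneg (x k))
  obtain ⟨a, -, φ, hφ, hda⟩ :=
    tendsto_subseq_of_bounded (isBounded_closedBall (x := (0 : E)) (r := 1))
      (fun k => mem_closedBall_zero_iff.2 (hd_norm k))
  have htφ : Tendsto (t ∘ φ) atTop atTop := hx.comp hφ.tendsto_atTop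
  have htφ_pos : ∀ᶠ k in atTop, 0 < t (φ k) := htφ.eventually_gt_atTop 0
  refine ⟨a, ?_, ⟨t ∘ φ, x ∘ φ, htφ, fun k => hxX (φ k), hda⟩, ?_⟩
  · have hnorm : Tendsto (fun k => ‖d (φ k)‖) atTop (𝓝 1) := by
      refine tendsto_const_nhds.congr' (htφ_pos.mono fun k hk => ?_)
      simp [d, t, norm_smul, inv_mul_cancel₀ hk.ne']
    rw [← norm_ne_zero_iff, tendsto_nhds_unique hda.norm hnorm]
    exact one_ne_zero
  · have hslope : Tendsto (fun k => (t (φ k))⁻¹ * c + ⟪u (φ k), d (φ k)⟫) atTop (𝓝 0) := by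
      simpa using (tendsto_inv_atTop_zero.comp htφ).mul_const c |>.add
        ((hu.comp hφ.tendsto_atTop).inner (𝕜 := ℝ) hda)
    have hbound : ∀ᶠ k in atTop, ((t (φ k))⁻¹ : ℝ) * f (t (φ k) • d (φ k)) ≤
        (((t (φ k))⁻¹ * c + ⟪u (φ k), d (φ k)⟫ : ℝ) : EReal) := htφ_pos.mono fun k hk => by
      rw [show t (φ k) • d (φ k) = x (φ k) from smul_inv_smul₀ hk.ne' _]
      calc ((t (φ k))⁻¹ : ℝ) * f (x (φ k))
          ≤ ((t (φ k))⁻¹ : ℝ) * ((c + ⟪u (φ k), x (φ k)⟫ : ℝ) : EReal) :=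
            mul_le_mul_of_nonneg_left (hfx (φ k)) (by exact_mod_cast (inv_pos.2 hk).le)
        _ = _ := by
            rw [← EReal.coe_mul, mul_add, inner_smul_right]
    calc asympFun f a
        ≤ liminf (fun k => ((t (φ k))⁻¹ : ℝ) * f (t (φ k) • d (φ k))) atTop :=
          sInf_le ⟨t ∘ φ, d ∘ φ, htφ, hda, rfl⟩
      _ ≤ ((0 : ℝ) : EReal) := liminf_le_of_le_coe_of_tendsto hbound hslope
      _ = 0 := EReal.coe_zero

theorem valFn_zero_le_of_le_add_inner [ProperSpace E] {f : E → EReal} {X : Set E}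
    (hlsc : LowerSemicontinuous f) (hX : IsClosed X)
    (hcone : asympCone X ∩ {d | asympFun f d ≤ 0} = {0})
    {u x : ℕ → E} {c : ℝ} (hu : Tendsto u atTop (𝓝 0)) (hxX : ∀ k, x k ∈ X)
    (hfx : ∀ k, f (x k) ≤ ((c + ⟪u k, x k⟫ : ℝ) : EReal)) :
    valFn f X 0 ≤ c := by
  by_cases hx : Tendsto (fun k => ‖x k‖) atTop atTop
  · obtain ⟨a, ha0, hacone, hasymp⟩ := exists_ne_zero_mem_asympCone_asympFun_nonpos hu hxX hfx hx
    exact absurd (hcone.subset ⟨hacone, hasymp⟩) ha0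
  · obtain ⟨R, hR⟩ : ∃ R, ∃ᶠ k in atTop, ‖x k‖ < R := by
      simpa only [Filter.tendsto_atTop, not_forall, not_eventually, not_le] using hx
    obtain ⟨a, -, φ, hφ, hxa⟩ := tendsto_subseq_of_frequently_bounded
      (isBounded_ball (x := (0 : E)) (r := R)) (by simpa using hR)
    exact valFn_zero_le_of_tendsto hlsc hX (hu.comp hφ.tendsto_atTop) hxa
      (fun k => hxX (φ k)) (fun k => hfx (φ k))

theorem lowerSemicontinuousAt_valFn_zero [ProperSpace E] {f : E → EReal} {X : Set E}
    (hlsc : LowerSemicontinuous f) (hX : IsClosed X)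
    (hcone : asympCone X ∩ {d | asympFun f d ≤ 0} = {0}) :
    LowerSemicontinuousAt (valFn f X) 0 := by
  intro y hy
  by_contra hfreq
  obtain ⟨c, hyc, hc⟩ := EReal.exists_between_coe_real hy
  obtain ⟨u, hu, hyu⟩ := frequently_iff_seq_forall.1 (not_eventually.1 hfreq)
  have happrox : ∀ k, ∃ x ∈ X, f x ≤ ((c + ⟪u k, x⟫ : ℝ) : EReal) := fun k => by
    obtain ⟨x, hxX, hx⟩ : ∃ x ∈ X, f x - ((⟪u k, x⟫ : ℝ) : EReal) < c := by
      simpa only [valFn, iInf_lt_iff, exists_prop] using (not_lt.1 (hyu k)).trans_lt hyc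
    exact ⟨x, hxX, EReal.sub_coe_le_iff_le_coe_add.1 hx.le⟩
  choose x hxX hfx using happrox
  exact (valFn_zero_le_of_le_add_inner hlsc hX hcone hu hxX hfx).not_gt hc

theorem stmt14_general {n : ℕ} (f : EuclideanSpace ℝ (Fin n) → EReal)
    (X : Set (EuclideanSpace ℝ (Fin n)))
    (hlsc : LowerSemicontinuous f) (hX : IsClosed X)
    (hcone : asympCone X ∩ {d | asympFun f d ≤ 0} = {0}) :
    LowerSemicontinuousAt (valFn f X) 0 ∧ ContinuousAt (valFn f X) 0 := by
  have hlsc₀ := lowerSemicontinuousAt_valFn_zero hlsc hX hcone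
  exact ⟨hlsc₀, continuousAt_iff_lower_upperSemicontinuousAt.2
    ⟨hlsc₀, upperSemicontinuous_valFn f X 0⟩⟩

theorem stmt14 {n : ℕ} (f : EuclideanSpace ℝ (Fin n) → EReal)
    (X : Set (EuclideanSpace ℝ (Fin n)))
    (hproper : ERealProper f) (hlsc : LowerSemicontinuous f) (hX : IsClosed X)
    (hunb : ¬ Bornology.IsBounded ({x | f x ≠ ⊤} ∩ X))
    (hcone : asympCone X ∩ {d | asympFun f d ≤ 0} = {0}) :
    LowerSemicontinuousAt (valFn f X) 0 ∧ ContinuousAt (valFn f X) 0 :=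
  stmt14_general f X hlsc hX hcone
end
end

section
/- Let f(x) = x²/(1 + x²) on ℝ. Then f is quasiconvex on ℝ, and its q-asymptotic function satisfies f^∞_q(d) > 0 for all d ≠ 0 (indeed {d : f^∞_q(d) ≤ 0} = {0}), while f is not coercive on ℝ. -/
open Filter Topology Metric Set RealInnerProductSpace

noncomputable section

variable {E : Type*} [NormedAddCommGroup E] [InnerProductSpace ℝ E]

/-! `x ^ 2 / (1 + x ^ 2)` decreases on `(-∞, 0]` and increases on `[0, ∞)`, hence is quasiconvex.
Its strict minimum `0` at the origin makes the difference quotient at `x = 0`, `t = 1` already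
positive in every direction `d ≠ 0`, while the bound `< 1` rules out coercivity. -/

theorem quasiconvexOn_univ_of_antitoneOn_monotoneOn {β : Type*} [Preorder β] {f : ℝ → β} {c : ℝ}
    (h_anti : AntitoneOn f (Iic c)) (h_mono : MonotoneOn f (Ici c)) :
    QuasiconvexOn ℝ univ f := by
  refine convex_univ.quasiconvexOn_of_convex_le fun r => convex_iff_ordConnected.2 ⟨?_⟩
  rintro x hx y hy z ⟨hxz, hzy⟩
  rcases le_total z c with hzc | hcz
  · exact (h_anti (hxz.trans hzc) hzc hxz).trans hx
  · exact (h_mono hcz (hcz.trans hzy) hzy).trans hy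

theorem erealQuasiconvex_iff {f : E → EReal} : ERealQuasiconvex f ↔ QuasiconvexOn ℝ univ f := by
  simp only [quasiconvexOn_iff_le_max, convex_univ, mem_univ, true_implies, true_and]
  refine ⟨fun hf x y a b ha hb hab => ?_, fun hf x y a ha ha1 => hf ha (sub_nonneg.2 ha1) (by ring)⟩
  obtain rfl : b = 1 - a := by linarith
  exact hf x y a ha (by linarith)

theorem QuasiconvexOn.erealQuasiconvex_coe {g : E → ℝ} (hg : QuasiconvexOn ℝ univ g) :
    ERealQuasiconvex (fun x => (g x : EReal)) :=
  erealQuasiconvex_iff.2 (hg.monotone_comp (g := Real.toEReal) EReal.coe_strictMono.monotone)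

theorem le_qAsympFun {f : E → EReal} {x : E} (hx : f x ≠ ⊤) {t : ℝ} (ht : 0 < t) (u : E) :
    ((t⁻¹ : ℝ) : EReal) * (f (x + t • u) - f x) ≤ qAsympFun f u :=
  le_iSup₂_of_le x hx (le_iSup₂_of_le t ht le_rfl)

theorem qAsympFun_zero_nonpos (f : E → EReal) : qAsympFun f 0 ≤ 0 :=
  iSup₂_le fun x _ => iSup₂_le fun t ht => by
    rw [smul_zero, add_zero]
    exact mul_nonpos_of_nonneg_of_nonpos (EReal.coe_nonneg.2 (inv_nonneg.2 (le_of_lt ht)))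
      EReal.sub_self_le_zero

theorem qAsympFun_pos_of_lt {f : E → EReal} {x u : E} (hx : f x ≠ ⊤) (h : f x < f (x + u)) :
    0 < qAsympFun f u := by
  have := le_qAsympFun hx one_pos u
  rw [inv_one, one_smul, EReal.coe_one, one_mul] at this
  exact (EReal.sub_pos.2 h).trans_le this

theorem sq_div_one_add_sq_le_of_sq_le {a b : ℝ} (h : a ^ 2 ≤ b ^ 2) :
    a ^ 2 / (1 + a ^ 2) ≤ b ^ 2 / (1 + b ^ 2) := by
  rw [div_le_div_iff₀ (by positivity) (by positivity)]
  nlinarith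

theorem quasiconvexOn_sq_div_one_add_sq :
    QuasiconvexOn ℝ univ (fun x : ℝ => x ^ 2 / (1 + x ^ 2)) := by
  refine quasiconvexOn_univ_of_antitoneOn_monotoneOn (c := 0) ?_ ?_
  · intro a _ b hb hab
    exact sq_div_one_add_sq_le_of_sq_le (by nlinarith [mem_Iic.1 hb])
  · intro a ha b _ hab
    exact sq_div_one_add_sq_le_of_sq_le (pow_le_pow_left₀ ha hab 2)

theorem sq_div_one_add_sq_lt_one (x : ℝ) : x ^ 2 / (1 + x ^ 2) < 1 :=
  (div_lt_one (by positivity)).2 (by linarith)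

theorem stmt17 :
    ERealQuasiconvex (fun x : ℝ => ((x ^ 2 / (1 + x ^ 2) : ℝ) : EReal)) ∧
      {d : ℝ | qAsympFun (fun x : ℝ => ((x ^ 2 / (1 + x ^ 2) : ℝ) : EReal)) d ≤ 0} = {0} ∧
      ¬ (∀ M : ℝ, ∃ R : ℝ, ∀ x : ℝ, R < |x| →
        (M : EReal) < ((x ^ 2 / (1 + x ^ 2) : ℝ) : EReal)) := by
  refine ⟨quasiconvexOn_sq_div_one_add_sq.erealQuasiconvex_coe, ?_, ?_⟩
  · refine eq_singleton_iff_unique_mem.2 ⟨qAsympFun_zero_nonpos _, fun d hd => ?_⟩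
    by_contra hd0
    have hpos : 0 < qAsympFun (fun x : ℝ => ((x ^ 2 / (1 + x ^ 2) : ℝ) : EReal)) d := by
      refine qAsympFun_pos_of_lt (x := 0) (EReal.coe_ne_top _) ?_
      rw [zero_add, EReal.coe_lt_coe_iff]
      norm_num
      positivity
    exact hpos.not_ge hd
  · intro h
    obtain ⟨R, hR⟩ := h 1
    have hR' : R < |(|R| + 1)| := by
      rw [abs_of_nonneg (by positivity)]
      linarith [le_abs_self R]
    exact (EReal.coe_lt_coe_iff.1 (hR _ hR')).not_gt (sq_div_one_add_sq_lt_one _)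
end
end
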